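/- arXiv:math/0508316 — 3 statements merged into one kernel-verified Lean document; each statement's English description precedes it below -/
import Mathlib

section
/- Let A be a commutative ℝ-algebra and let X, H, V be ℝ-linear derivations of A. For a ∈ A and a derivation D write a•D for the derivation u ↦ a·D(u), and ⁅D₁,D₂⁆ := D₁∘D₂ − D₂∘D₁ for the commutator. Suppose I, J, K, λ ∈ A satisfy ⁅V,X⁆ = H, ⁅H,V⁆ = X + I•H + J•V, ⁅X,H⁆ = K•V, and V(λ) = −λ·I. Set G := X + λ•V and 𝕂 := K − H(λ) + λ² − λ·J. Then ⁅V,G⁆ = H − (λ·I)•V, ⁅H,V⁆ = G + I•H + (J − λ)•V, and ⁅G,H⁆ = 𝕂•V − λ•G − (λ·I)•H. -/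
/-- **Bracket relations for the magnetic vector field on a Finsler surface,
abstracted to derivations of a commutative ℝ-algebra.**
Given derivations `X, H, V` satisfying the structural commutation relations of the
canonical coframing of the unit sphere bundle of a Finsler surface, together with a
function `lam` with `V lam = -lam * I`, the magnetic vector field `G = X + lam • V`
satisfies the stated bracket relations. -/
theorem stmt_0 (A : Type*) [CommRing A] [Algebra ℝ A]
    (X H V : Derivation ℝ A A) (I J K lam : A)
    (h1 : ⁅V, X⁆ = H)
    (h2 : ⁅H, V⁆ = X + I • H + J • V)
    (h3 : ⁅X, H⁆ = K • V)
    (h4 : V lam = -(lam * I)) :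
    ⁅V, X + lam • V⁆ = H - (lam * I) • V ∧
    ⁅H, V⁆ = (X + lam • V) + I • H + (J - lam) • V ∧
    ⁅X + lam • V, H⁆ =
      (K - H lam + lam ^ 2 - lam * J) • V - lam • (X + lam • V) - (lam * I) • H := by
  have key : ∀ a : A,
      (V (X a) - X (V a) = H a) ∧ (H (V a) - V (H a) = X a + I * H a + J * V a) ∧
      (X (H a) - H (X a) = K * V a) := by
    intro a
    have e1 := congrArg (fun D : Derivation ℝ A A => D a) h1
    have e2 := congrArg (fun D : Derivation ℝ A A => D a) h2
    have e3 := congrArg (fun D : Derivation ℝ A A => D a) h3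
    simp only [Derivation.commutator_apply, Derivation.add_apply, Derivation.smul_apply,
      smul_eq_mul] at e1 e2 e3
    exact ⟨e1, e2, e3⟩
  refine ⟨?_, ?_, ?_⟩ <;> ext a <;>
  · obtain ⟨e1, e2, e3⟩ := key a
    simp only [Derivation.commutator_apply, Derivation.add_apply, Derivation.sub_apply,
      Derivation.smul_apply, Derivation.leibniz, smul_eq_mul, map_add, map_mul, h4]
    first
    | linear_combination e1
    | linear_combination e2
    | linear_combination -e3 - lam * e2
    | linear_combination e3 + lam * e2
    | linear_combination -e3 + lam * e2
    | linear_combination e3 - lam * e2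
end

section
/- Let A be a commutative ℝ-algebra and let G, H, V be ℝ-linear derivations of A. For a ∈ A and a derivation D write a•D for the derivation u ↦ a·D(u), and ⁅D₁,D₂⁆ := D₁∘D₂ − D₂∘D₁. Suppose I, J, 𝕂, λ ∈ A satisfy ⁅V,G⁆ = H − (λ·I)•V, ⁅H,V⁆ = G + I•H + (J − λ)•V, and ⁅G,H⁆ = 𝕂•V − λ•G − (λ·I)•H. Then for every u ∈ A the Pestov identity holds: 2·H(u)·V(G(u)) = (G(u))² + (H(u))² − 𝕂·(V(u))² + G(H(u)·V(u)) − H(G(u)·V(u)) + V(G(u)·H(u)) + G(u)·(I·H(u) + J·V(u)). -/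
/-- **The two-dimensional Pestov identity for magnetic flows on Finsler surfaces,
abstracted to derivations of a commutative ℝ-algebra.**
Given derivations `G, H, V` satisfying the bracket relations of the magnetic vector
field and the canonical frame on the unit sphere bundle of a Finsler surface,
the Pestov identity holds for every `u`. -/
theorem stmt_1 (A : Type*) [CommRing A] [Algebra ℝ A]
    (G H V : Derivation ℝ A A) (I J 𝕂 lam : A)
    (h1 : ⁅V, G⁆ = H - (lam * I) • V)
    (h2 : ⁅H, V⁆ = G + I • H + (J - lam) • V)
    (h3 : ⁅G, H⁆ = 𝕂 • V - lam • G - (lam * I) • H) :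
    ∀ u : A,
      2 * (H u * V (G u)) =
        (G u) ^ 2 + (H u) ^ 2 - 𝕂 * (V u) ^ 2
          + G (H u * V u) - H (G u * V u) + V (G u * H u)
          + G u * (I * H u + J * V u) := by
  intro u
  have e1 : V (G u) - G (V u) = H u - lam * I * V u := by
    have := congrArg (fun D : Derivation ℝ A A => D u) h1
    simpa [Derivation.commutator_apply, smul_eq_mul] using this
  have e2 : H (V u) - V (H u) = G u + I * H u + (J - lam) * V u := by
    have := congrArg (fun D : Derivation ℝ A A => D u) h2
    simpa [Derivation.commutator_apply, smul_eq_mul] using this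
  have e3 : G (H u) - H (G u) = 𝕂 * V u - lam * G u - lam * I * H u := by
    have := congrArg (fun D : Derivation ℝ A A => D u) h3
    simpa [Derivation.commutator_apply, smul_eq_mul] using this
  have lG : G (H u * V u) = H u * G (V u) + V u * G (H u) := by
    simp [Derivation.leibniz, smul_eq_mul]
  have lH : H (G u * V u) = G u * H (V u) + V u * H (G u) := by
    simp [Derivation.leibniz, smul_eq_mul]
  have lV : V (G u * H u) = G u * V (H u) + H u * V (G u) := by
    simp [Derivation.leibniz, smul_eq_mul]
  rw [lG, lH, lV]
  linear_combination (H u) * e1 + (G u) * e2 - (V u) * e3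
end

section
/- Under the stated hypotheses, for every smooth function u : W → ℝ, at every point of W where F = 1 and for all indices l, k: u_{:l·k} − u_{·k:l} = ( P^i_{lk} + Y^i_l y_k + ∂Y^i_l/∂y^k ) u_{·i}. -/
/-!
Write `u_{:l} = ∂u/∂x^l − N^p_l u_{·p} + F Y^j_l u_{·j}` and differentiate in `y^k`. By the symmetry
of second partial derivatives every second-order term cancels against `u_{·k:l}`, leaving
`(Γ^p_{lk} − ∂N^p_l/∂y^k + F_{·k} Y^p_l + F ∂Y^p_l/∂y^k) u_{·p}`. Since
`∂N^p_l/∂y^k = Γ^p_{lk} + y^j ∂Γ^p_{lj}/∂y^k`, the symmetry of `Γ` turns the first two terms into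
`P^p_{lk}`. Finally `y_k = F F_{·k}`: indeed `y_k = ½ y^j ∂_j ∂_k (F²)`, and Euler's relation
applies to the 1-homogeneous function `∂_k (F²)`. So on `{F = 1}` the remaining terms are those
claimed.
The product rule for `Y^i_l = Ω_{lj} g^{ij}` needs `g^{ij}` differentiable, which follows from
Cramer's rule.
-/

noncomputable section

/-- A point of the local chart `W ⊆ ℝⁿ × (ℝⁿ ∖ {0})` of `TM ∖ {0}`. -/
abbrev Pt (n : ℕ) := (Fin n → ℝ) × (Fin n → ℝ)

/-- Partial derivative in the `k`-th base (`x`) direction. -/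
def pdx {n : ℕ} (k : Fin n) (f : Pt n → ℝ) (z : Pt n) : ℝ :=
  fderiv ℝ f z (Pi.single k 1, 0)

/-- Partial derivative in the `k`-th fibre (`y`) direction. -/
def pdy {n : ℕ} (k : Fin n) (f : Pt n → ℝ) (z : Pt n) : ℝ :=
  fderiv ℝ f z (0, Pi.single k 1)

/-- The fundamental tensor `g_{ij} = ½ ∂²(F²)/∂y^i∂y^j`. -/
def gF {n : ℕ} (F : Pt n → ℝ) (i j : Fin n) : Pt n → ℝ :=
  fun z => (1 / 2 : ℝ) * pdy i (pdy j (fun w => F w ^ 2)) z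

/-- The Cartan tensor `C_{ijk} = ¼ ∂³(F²)/∂y^i∂y^j∂y^k`. -/
def CF {n : ℕ} (F : Pt n → ℝ) (i j k : Fin n) : Pt n → ℝ :=
  fun z => (1 / 4 : ℝ) * pdy i (pdy j (pdy k (fun w => F w ^ 2))) z

/-- `y_k := g_{kj} y^j`. -/
def ylow {n : ℕ} (F : Pt n → ℝ) (k : Fin n) : Pt n → ℝ :=
  fun z => ∑ j, gF F k j z * z.2 j

/-- `N^i_j := Γ^i_{jk} y^k`. -/
def Nc {n : ℕ} (Γ : Fin n → Fin n → Fin n → Pt n → ℝ) (i j : Fin n) : Pt n → ℝ :=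
  fun z => ∑ k, Γ i j k z * z.2 k

/-- Horizontal derivative of a scalar: `u_{|k} := ∂u/∂x^k − N^p_k ∂u/∂y^p`. -/
def dhS {n : ℕ} (Γ : Fin n → Fin n → Fin n → Pt n → ℝ) (k : Fin n) (u : Pt n → ℝ) :
    Pt n → ℝ :=
  fun z => pdx k u z - ∑ p, Nc Γ p k z * pdy p u z

/-- The Chern curvature contraction `P^i_{lk} := −y^j ∂Γ^i_{jl}/∂y^k`. -/
def Pc {n : ℕ} (Γ : Fin n → Fin n → Fin n → Pt n → ℝ) (i l k : Fin n) : Pt n → ℝ :=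
  fun z => -∑ j, z.2 j * pdy k (Γ i j l) z

/-- The Riemann curvature tensor `R^i_{jkl}` of the connection. -/
def Rfull {n : ℕ} (Γ : Fin n → Fin n → Fin n → Pt n → ℝ) (i j k l : Fin n) :
    Pt n → ℝ :=
  fun z => pdx k (Γ i j l) z - pdx l (Γ i j k) z
    + (∑ m, pdy m (Γ i j k) z * Nc Γ m l z)
    - (∑ m, pdy m (Γ i j l) z * Nc Γ m k z)
    + (∑ m, Γ m j l z * Γ i m k z) - ∑ m, Γ m j k z * Γ i m l z

/-- `R^i_{kl} := y^j R^i_{jkl}`. -/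
def Rc {n : ℕ} (Γ : Fin n → Fin n → Fin n → Pt n → ℝ) (i k l : Fin n) : Pt n → ℝ :=
  fun z => ∑ j, z.2 j * Rfull Γ i j k l z

/-- The Lorentz force `Y^i_j := Ω_{jk} g^{ik}` (with `Ω` a function of `x` only). -/
def Yl {n : ℕ} (Ω : Fin n → Fin n → (Fin n → ℝ) → ℝ)
    (ginv : Fin n → Fin n → Pt n → ℝ) (i j : Fin n) : Pt n → ℝ :=
  fun z => ∑ k, Ω j k z.1 * ginv i k z

/-- Magnetic derivative of a scalar: `u_{:k} := u_{|k} + F Y^j_k u_{·j}`. -/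
def dmS {n : ℕ} (F : Pt n → ℝ) (Γ : Fin n → Fin n → Fin n → Pt n → ℝ)
    (Ω : Fin n → Fin n → (Fin n → ℝ) → ℝ) (ginv : Fin n → Fin n → Pt n → ℝ)
    (k : Fin n) (u : Pt n → ℝ) : Pt n → ℝ :=
  fun z => dhS Γ k u z + F z * ∑ j, Yl Ω ginv j k z * pdy j u z

/-- Horizontal covariant derivative of the Lorentz force:
`Y^i_{j|k} := ∂Y^i_j/∂x^k − N^p_k ∂Y^i_j/∂y^p + Γ^i_{kp} Y^p_j − Γ^p_{kj} Y^i_p`. -/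
def Ydh {n : ℕ} (Γ : Fin n → Fin n → Fin n → Pt n → ℝ)
    (Ω : Fin n → Fin n → (Fin n → ℝ) → ℝ) (ginv : Fin n → Fin n → Pt n → ℝ)
    (i j k : Fin n) : Pt n → ℝ :=
  fun z => pdx k (Yl Ω ginv i j) z - (∑ p, Nc Γ p k z * pdy p (Yl Ω ginv i j) z)
    + (∑ p, Γ i k p z * Yl Ω ginv p j z) - ∑ p, Γ p k j z * Yl Ω ginv i p z

/-- The twisted curvature `R̃^i_{lk}` of the magnetic flow. -/
def Rt {n : ℕ} (F : Pt n → ℝ) (Γ : Fin n → Fin n → Fin n → Pt n → ℝ)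
    (Ω : Fin n → Fin n → (Fin n → ℝ) → ℝ) (ginv : Fin n → Fin n → Pt n → ℝ)
    (i l k : Fin n) : Pt n → ℝ :=
  fun z => Rc Γ i l k z
    + (Ydh Γ Ω ginv i l k z - Ydh Γ Ω ginv i k l z)
    - ((∑ m, Pc Γ i l m z * Yl Ω ginv m k z) - ∑ m, Pc Γ i k m z * Yl Ω ginv m l z)
    + ((∑ j, Yl Ω ginv j l z * pdy j (Yl Ω ginv i k) z)
        - ∑ j, Yl Ω ginv j k z * pdy j (Yl Ω ginv i l) z)
    + ∑ s, ylow F s z * (Yl Ω ginv s k z * Yl Ω ginv i l z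
        - Yl Ω ginv s l z * Yl Ω ginv i k z)

open Filter Topology

section Calculus

variable {E : Type*} [NormedAddCommGroup E] [NormedSpace ℝ E]

theorem fderiv_fderiv_apply_comm {f : E → ℝ} {z : E} (hf : ContDiffAt ℝ 2 f z) (v w : E) :
    fderiv ℝ (fun a => fderiv ℝ f a v) z w = fderiv ℝ (fun a => fderiv ℝ f a w) z v := by
  have hd : DifferentiableAt ℝ (fderiv ℝ f) z :=
    (hf.fderiv_right (m := 1) (by norm_num)).differentiableAt (by norm_num)
  rw [fderiv_clm_apply hd (differentiableAt_const v),
    fderiv_clm_apply hd (differentiableAt_const w)]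
  simpa using hf.isSymmSndFDerivAt (by simp) w v

theorem differentiableAt_det {ι : Type*} [Fintype ι] [DecidableEq ι]
    {M : E → Matrix ι ι ℝ} {z : E} (hM : ∀ a b, DifferentiableAt ℝ (fun w => M w a b) z) :
    DifferentiableAt ℝ (fun w => (M w).det) z := by
  simp only [Matrix.det_apply, Units.smul_def, zsmul_eq_mul]
  exact DifferentiableAt.fun_sum fun σ _ =>
    (HasFDerivAt.finsetProd fun i _ => (hM (σ i) i).hasFDerivAt).differentiableAt.const_mul _

theorem differentiableAt_apply_of_mul_eq_one {ι : Type*} [Fintype ι] [DecidableEq ι]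
    {A M : E → Matrix ι ι ℝ} {z : E} (hAM : ∀ᶠ w in 𝓝 z, A w * M w = 1)
    (hM : ∀ a b, DifferentiableAt ℝ (fun w => M w a b) z) (i j : ι) :
    DifferentiableAt ℝ (fun w => A w i j) z := by
  have hA : (fun w => A w i j) =ᶠ[𝓝 z] fun w => (M w).det⁻¹ * (M w).adjugate i j := by
    filter_upwards [hAM] with w hw
    rw [← Matrix.inv_eq_left_inv hw, Matrix.inv_def, Ring.inverse_eq_inv', Matrix.smul_apply,
      smul_eq_mul]
  have hdet : (M z).det ≠ 0 := (Matrix.isUnit_det_of_left_inverse hAM.self_of_nhds).ne_zero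
  refine (((differentiableAt_det hM).inv hdet).mul ?_).congr_of_eventuallyEq hA
  simp only [Matrix.adjugate_apply]
  refine differentiableAt_det fun a b => ?_
  by_cases hab : a = j
  · subst hab; simp
  · simpa [Matrix.updateRow_ne hab] using hM a b

variable {V : Type*} [NormedAddCommGroup V] [NormedSpace ℝ V]

theorem fderiv_apply_zero_snd_eq_of_homogeneous {h : E × V → ℝ} {z : E × V} {m : ℕ}
    (hd : DifferentiableAt ℝ h z) (hhom : ∀ t : ℝ, 0 < t → h (z.1, t • z.2) = t ^ m * h z) :
    fderiv ℝ h z (0, z.2) = m * h z := by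
  have hray : HasDerivAt (fun t : ℝ => ((z.1, t • z.2) : E × V)) (0, z.2) 1 := by
    simpa using (hasDerivAt_const (1 : ℝ) z.1).prodMk ((hasDerivAt_id (1 : ℝ)).smul_const z.2)
  have hcomp : HasDerivAt (fun t : ℝ => h (z.1, t • z.2)) (fderiv ℝ h z (0, z.2)) 1 := by
    have hd' : HasFDerivAt h (fderiv ℝ h z) (z.1, (1 : ℝ) • z.2) := by
      simpa using hd.hasFDerivAt
    exact hd'.comp_hasDerivAt 1 hray
  have hpow : HasDerivAt (fun t : ℝ => h (z.1, t • z.2)) (m * h z) 1 := by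
    refine (((hasDerivAt_pow m (1 : ℝ)).mul_const (h z)).congr_of_eventuallyEq ?_).congr_deriv
      (by simp)
    filter_upwards [eventually_gt_nhds one_pos] with t ht using hhom t ht
  exact hcomp.unique hpow

theorem fderiv_apply_zero_snd_at_smul_of_homogeneous {G : E × V → ℝ} {W : Set (E × V)}
    (hW : IsOpen W) {z : E × V} (hz : z ∈ W) {t : ℝ} (ht : 0 < t) {m : ℕ}
    (hGz : DifferentiableAt ℝ G z) (hGtz : DifferentiableAt ℝ G (z.1, t • z.2))
    (hhom : ∀ w ∈ W, G (w.1, t • w.2) = t ^ (m + 1) * G w) (v : V) :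
    fderiv ℝ G (z.1, t • z.2) (0, v) = t ^ m * fderiv ℝ G z (0, v) := by
  set L : E × V →L[ℝ] E × V :=
    (ContinuousLinearMap.id ℝ E).prodMap (t • ContinuousLinearMap.id ℝ V)
  have hL : ∀ w, L w = (w.1, t • w.2) := fun w => rfl
  have hcomp : HasFDerivAt (G ∘ L) ((fderiv ℝ G (z.1, t • z.2)).comp L) z :=
    (hL z ▸ hGtz.hasFDerivAt).comp z L.hasFDerivAt
  have hscal : HasFDerivAt (G ∘ L) (t ^ (m + 1) • fderiv ℝ G z) z := by
    refine (hGz.hasFDerivAt.const_smul (t ^ (m + 1))).congr_of_eventuallyEq ?_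
    filter_upwards [hW.mem_nhds hz] with w hw
    simp [hL, hhom w hw]
  have key := congrArg (fun Φ : E × V →L[ℝ] ℝ => Φ (0, v)) (hcomp.unique hscal)
  simp only [ContinuousLinearMap.comp_apply, hL, smul_apply, smul_eq_mul] at key
  rw [show ((0 : E), t • v) = t • ((0 : E), v) by simp, map_smul, smul_eq_mul, pow_succ] at key
  exact mul_left_cancel₀ ht.ne' (key.trans (by ring))

end Calculus

section PartialDerivatives

variable {n : ℕ} {f g : Pt n → ℝ} {z : Pt n}

theorem pdy_add (k : Fin n) (hf : DifferentiableAt ℝ f z) (hg : DifferentiableAt ℝ g z) :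
    pdy k (fun w => f w + g w) z = pdy k f z + pdy k g z := by
  simp [pdy, fderiv_fun_add hf hg]

theorem pdy_sub (k : Fin n) (hf : DifferentiableAt ℝ f z) (hg : DifferentiableAt ℝ g z) :
    pdy k (fun w => f w - g w) z = pdy k f z - pdy k g z := by
  simp [pdy, fderiv_fun_sub hf hg]

theorem pdy_mul (k : Fin n) (hf : DifferentiableAt ℝ f z) (hg : DifferentiableAt ℝ g z) :
    pdy k (fun w => f w * g w) z = f z * pdy k g z + g z * pdy k f z := by
  simp [pdy, fderiv_fun_mul hf hg]

theorem pdy_sum {ι : Type*} {s : Finset ι} {f : ι → Pt n → ℝ} (k : Fin n)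
    (hf : ∀ i ∈ s, DifferentiableAt ℝ (f i) z) :
    pdy k (fun w => ∑ i ∈ s, f i w) z = ∑ i ∈ s, pdy k (f i) z := by
  simp [pdy, fderiv_fun_sum hf]

theorem pdy_snd_apply (k j : Fin n) :
    pdy k (fun w : Pt n => w.2 j) z = if j = k then 1 else 0 := by
  have hL : (fun w : Pt n => w.2 j) =
      ⇑((ContinuousLinearMap.proj j).comp (ContinuousLinearMap.snd ℝ (Fin n → ℝ) (Fin n → ℝ))) :=
    rfl
  simp [pdy, hL, ContinuousLinearMap.fderiv, Pi.single_apply]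

theorem pdy_eq_of_eventuallyEq (k : Fin n) (h : f =ᶠ[𝓝 z] g) : pdy k f z = pdy k g z := by
  simp [pdy, h.fderiv_eq]

theorem sum_mul_pdy (v : Fin n → ℝ) : ∑ j, v j * pdy j f z = fderiv ℝ f z (0, v) := by
  have hv : ((0 : Fin n → ℝ), v) = ∑ j, v j • ((0 : Fin n → ℝ), (Pi.single j 1 : Fin n → ℝ)) := by
    ext i <;> simp [Prod.fst_sum, Prod.snd_sum, Pi.single_apply]
  rw [hv, map_sum]
  simp only [map_smul, smul_eq_mul, pdy]

theorem contDiffAt_pdy {m : ℕ} (k : Fin n) (hf : ContDiffAt ℝ (m + 1) f z) :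
    ContDiffAt ℝ m (pdy k f) z :=
  (hf.fderiv_right le_rfl).clm_apply contDiffAt_const

theorem contDiffAt_pdx {m : ℕ} (k : Fin n) (hf : ContDiffAt ℝ (m + 1) f z) :
    ContDiffAt ℝ m (pdx k f) z :=
  (hf.fderiv_right le_rfl).clm_apply contDiffAt_const

theorem pdy_pdy_comm (hf : ContDiffAt ℝ 2 f z) (k p : Fin n) :
    pdy k (pdy p f) z = pdy p (pdy k f) z :=
  fderiv_fderiv_apply_comm hf _ _

theorem pdy_pdx_comm (hf : ContDiffAt ℝ 2 f z) (k l : Fin n) :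
    pdy k (pdx l f) z = pdx l (pdy k f) z :=
  fderiv_fderiv_apply_comm hf _ _

end PartialDerivatives

section Finsler

variable {n : ℕ}

theorem ylow_eq_mul_pdy {W : Set (Pt n)} (hW : IsOpen W)
    (hWcone : ∀ z ∈ W, ∀ t : ℝ, 0 < t → (z.1, t • z.2) ∈ W)
    {F : Pt n → ℝ} (hF : ContDiffOn ℝ 2 F W)
    (hFhom : ∀ z ∈ W, ∀ t : ℝ, 0 < t → F (z.1, t • z.2) = t * F z)
    {z : Pt n} (hz : z ∈ W) (k : Fin n) :
    ylow F k z = F z * pdy k F z := by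
  set G : Pt n → ℝ := fun w => F w ^ 2
  have hG : ∀ w ∈ W, ContDiffAt ℝ 2 G w := fun w hw => (hF.contDiffAt (hW.mem_nhds hw)).pow 2
  have hGd : ∀ w ∈ W, DifferentiableAt ℝ G w := fun w hw =>
    (hG w hw).differentiableAt two_ne_zero
  -- `F²` is 2-homogeneous, so `∂(F²)/∂y^k` is 1-homogeneous and Euler's relation applies to it.
  have hGk : ∀ t : ℝ, 0 < t → pdy k G (z.1, t • z.2) = t ^ 1 * pdy k G z := fun t ht =>
    fderiv_apply_zero_snd_at_smul_of_homogeneous hW hz ht (hGd z hz) (hGd _ (hWcone z hz t ht))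
      (fun w hw => by simp only [G, hFhom w hw t ht]; ring) _
  have heuler : fderiv ℝ (pdy k G) z (0, z.2) = pdy k G z := by
    simpa using fderiv_apply_zero_snd_eq_of_homogeneous
      ((contDiffAt_pdy (m := 1) k (hG z hz)).differentiableAt one_ne_zero) hGk
  have hFd : DifferentiableAt ℝ F z := (hF.contDiffAt (hW.mem_nhds hz)).differentiableAt two_ne_zero
  calc ylow F k z = (1 / 2) * ∑ j, z.2 j * pdy j (pdy k G) z := by
        simp only [ylow, gF, Finset.mul_sum]
        refine Finset.sum_congr rfl fun j _ => ?_
        rw [show (fun w => F w ^ 2) = G from rfl, pdy_pdy_comm (hG z hz) k j]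
        ring
    _ = (1 / 2) * pdy k (fun w => F w * F w) z := by
        rw [sum_mul_pdy, heuler]; simp only [G, pow_two]
    _ = F z * pdy k F z := by rw [pdy_mul k hFd hFd]; ring

theorem differentiableAt_ginv {W : Set (Pt n)} (hW : IsOpen W) {F : Pt n → ℝ}
    (hF : ContDiffOn ℝ 3 F W) {ginv : Fin n → Fin n → Pt n → ℝ}
    (hginv : ∀ z ∈ W, ∀ i j, ∑ k, ginv i k z * gF F k j z = if i = j then (1:ℝ) else 0)
    {z : Pt n} (hz : z ∈ W) (i j : Fin n) : DifferentiableAt ℝ (ginv i j) z := by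
  have hG : ContDiffAt ℝ (1 + 1 + 1) (fun w => F w ^ 2) z :=
    (hF.contDiffAt (hW.mem_nhds hz)).pow 2
  refine differentiableAt_apply_of_mul_eq_one (A := fun w => Matrix.of fun a b => ginv a b w)
    (M := fun w => Matrix.of fun a b => gF F a b w) ?_ (fun a b => ?_) i j
  · filter_upwards [hW.mem_nhds hz] with w hw
    ext a b
    simpa [Matrix.mul_apply, Matrix.one_apply] using hginv w hw a b
  · exact ((contDiffAt_pdy a (contDiffAt_pdy b hG)).differentiableAt one_ne_zero).const_mul _

theorem differentiableAt_Yl {Ω : Fin n → Fin n → (Fin n → ℝ) → ℝ}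
    {ginv : Fin n → Fin n → Pt n → ℝ} {z : Pt n}
    (hΩ : ∀ j k, DifferentiableAt ℝ (fun w : Pt n => Ω j k w.1) z)
    (hginv : ∀ i j, DifferentiableAt ℝ (ginv i j) z) (i j : Fin n) :
    DifferentiableAt ℝ (Yl Ω ginv i j) z :=
  DifferentiableAt.fun_sum fun k _ => (hΩ j k).mul (hginv i k)

theorem pdy_Nc {Γ : Fin n → Fin n → Fin n → Pt n → ℝ} {z : Pt n} {p l : Fin n}
    (hΓ : ∀ j, DifferentiableAt ℝ (Γ p l j) z) (k : Fin n) :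
    pdy k (Nc Γ p l) z = ∑ j, z.2 j * pdy k (Γ p l j) z + Γ p l k z := by
  have hy : ∀ j, DifferentiableAt ℝ (fun w : Pt n => w.2 j) z := fun j => by fun_prop
  unfold Nc
  rw [pdy_sum k fun j _ => (hΓ j).fun_mul (hy j)]
  simp [pdy_mul k (hΓ _) (hy _), pdy_snd_apply, Finset.sum_add_distrib, mul_comm, add_comm]

theorem Pc_eq_sub_pdy_Nc {Γ : Fin n → Fin n → Fin n → Pt n → ℝ} {z : Pt n}
    (hΓ : ∀ i j k, DifferentiableAt ℝ (Γ i j k) z) (hΓsym : ∀ i j k, Γ i j k =ᶠ[𝓝 z] Γ i k j)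
    (i l k : Fin n) :
    Pc Γ i l k z = Γ i l k z - pdy k (Nc Γ i l) z := by
  simp only [Pc, pdy_Nc (hΓ i l) k, pdy_eq_of_eventuallyEq k (hΓsym i _ l)]
  ring

end Finsler

section Commutator

variable {n : ℕ} {F : Pt n → ℝ} {Γ : Fin n → Fin n → Fin n → Pt n → ℝ}
  {Ω : Fin n → Fin n → (Fin n → ℝ) → ℝ} {ginv : Fin n → Fin n → Pt n → ℝ}
  {u : Pt n → ℝ} {z : Pt n}

theorem pdy_dmS (hu : ContDiffAt ℝ 2 u z) (hF : DifferentiableAt ℝ F z)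
    (hΓ : ∀ i j k, DifferentiableAt ℝ (Γ i j k) z)
    (hY : ∀ i j, DifferentiableAt ℝ (Yl Ω ginv i j) z) (l k : Fin n) :
    pdy k (dmS F Γ Ω ginv l u) z
      = pdx l (pdy k u) z
        - ∑ p, (Nc Γ p l z * pdy p (pdy k u) z + pdy p u z * pdy k (Nc Γ p l) z)
        + (F z * ∑ j, (Yl Ω ginv j l z * pdy j (pdy k u) z
            + pdy j u z * pdy k (Yl Ω ginv j l) z)
          + (∑ j, Yl Ω ginv j l z * pdy j u z) * pdy k F z) := by
  have hu' : ∀ p, DifferentiableAt ℝ (pdy p u) z := fun p =>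
    (contDiffAt_pdy (m := 1) p hu).differentiableAt one_ne_zero
  have hux : DifferentiableAt ℝ (pdx l u) z :=
    (contDiffAt_pdx (m := 1) l hu).differentiableAt one_ne_zero
  have hN : ∀ p, DifferentiableAt ℝ (Nc Γ p l) z := fun p =>
    DifferentiableAt.fun_sum fun j _ => (hΓ p l j).mul (by fun_prop)
  have hNu : DifferentiableAt ℝ (fun w => ∑ p, Nc Γ p l w * pdy p u w) z :=
    DifferentiableAt.fun_sum fun p _ => (hN p).fun_mul (hu' p)
  have hYu : DifferentiableAt ℝ (fun w => ∑ j, Yl Ω ginv j l w * pdy j u w) z :=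
    DifferentiableAt.fun_sum fun j _ => (hY j l).fun_mul (hu' j)
  unfold dmS dhS
  rw [pdy_add k (hux.fun_sub hNu) (hF.fun_mul hYu), pdy_sub k hux hNu, pdy_mul k hF hYu,
    pdy_sum k fun p _ => (hN p).fun_mul (hu' p), pdy_sum k fun j _ => (hY j l).fun_mul (hu' j),
    pdy_pdx_comm hu]
  simp only [pdy_mul k (hN _) (hu' _), pdy_mul k (hY _ l) (hu' _), pdy_pdy_comm hu k]

theorem pdy_dmS_commutator (hu : ContDiffAt ℝ 2 u z) (hF : DifferentiableAt ℝ F z)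
    (hΓ : ∀ i j k, DifferentiableAt ℝ (Γ i j k) z) (hΓsym : ∀ i j k, Γ i j k =ᶠ[𝓝 z] Γ i k j)
    (hY : ∀ i j, DifferentiableAt ℝ (Yl Ω ginv i j) z) (l k : Fin n) :
    pdy k (dmS F Γ Ω ginv l u) z
        - ((pdx l (pdy k u) z - (∑ p, Nc Γ p l z * pdy p (pdy k u) z)
              - ∑ p, Γ p l k z * pdy p u z)
            + F z * ∑ j, Yl Ω ginv j l z * pdy j (pdy k u) z)
      = ∑ i, (Pc Γ i l k z + pdy k F z * Yl Ω ginv i l z + F z * pdy k (Yl Ω ginv i l) z)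
          * pdy i u z := by
  rw [pdy_dmS hu hF hΓ hY]
  calc _ = ∑ i, (Γ i l k z * pdy i u z - pdy i u z * pdy k (Nc Γ i l) z
          + F z * (pdy i u z * pdy k (Yl Ω ginv i l) z)
          + Yl Ω ginv i l z * pdy i u z * pdy k F z) := by
        simp only [Finset.sum_add_distrib, Finset.sum_sub_distrib, Finset.mul_sum, Finset.sum_mul,
          mul_add]
        ring
    _ = _ := Finset.sum_congr rfl fun i _ => by rw [Pc_eq_sub_pdy_Nc hΓ hΓsym]; ring

end Commutator

theorem stmt_9_general (n : ℕ) (W : Set (Pt n)) (hWopen : IsOpen W)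
    (hWcone : ∀ z ∈ W, ∀ t : ℝ, 0 < t → (z.1, t • z.2) ∈ W)
    (F : Pt n → ℝ) (hFsmooth : ContDiffOn ℝ (⊤ : ℕ∞) F W)
    (hFhom : ∀ z ∈ W, ∀ t : ℝ, 0 < t → F (z.1, t • z.2) = t * F z)
    (ginv : Fin n → Fin n → Pt n → ℝ)
    (hginv' : ∀ z ∈ W, ∀ i j, ∑ k, ginv i k z * gF F k j z = if i = j then (1:ℝ) else 0)
    (Γ : Fin n → Fin n → Fin n → Pt n → ℝ)
    (hΓsmooth : ∀ i j k, ContDiffOn ℝ (⊤ : ℕ∞) (Γ i j k) W)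
    (hΓsym : ∀ i j k, ∀ z ∈ W, Γ i j k z = Γ i k j z)
    (Ω : Fin n → Fin n → (Fin n → ℝ) → ℝ)
    (hΩsmooth : ∀ j k, ContDiffOn ℝ (⊤ : ℕ∞) (fun z : Pt n => Ω j k z.1) W)
    (u : Pt n → ℝ) (hu : ContDiffOn ℝ (⊤ : ℕ∞) u W) :
    ∀ z ∈ W, F z = 1 → ∀ l k,
      pdy k (dmS F Γ Ω ginv l u) z
        - ((pdx l (pdy k u) z - (∑ p, Nc Γ p l z * pdy p (pdy k u) z)
              - ∑ p, Γ p l k z * pdy p u z)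
            + F z * ∑ j, Yl Ω ginv j l z * pdy j (pdy k u) z)
      = ∑ i, (Pc Γ i l k z + Yl Ω ginv i l z * ylow F k z
          + pdy k (Yl Ω ginv i l) z) * pdy i u z := by
  intro z hz hF1 l k
  have hW : W ∈ 𝓝 z := hWopen.mem_nhds hz
  have hY : ∀ i j, DifferentiableAt ℝ (Yl Ω ginv i j) z :=
    differentiableAt_Yl (fun j k => ((hΩsmooth j k).contDiffAt hW).differentiableAt (by norm_num))
      (differentiableAt_ginv hWopen (hFsmooth.of_le (by norm_cast)) hginv' hz)
  rw [pdy_dmS_commutator ((hu.contDiffAt hW).of_le (by norm_cast))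
    ((hFsmooth.contDiffAt hW).differentiableAt (by norm_num))
    (fun i j k => ((hΓsmooth i j k).contDiffAt hW).differentiableAt (by norm_num))
    (fun i j k => eventually_of_mem hW (hΓsym i j k)) hY]
  refine Finset.sum_congr rfl fun i _ => ?_
  rw [ylow_eq_mul_pdy hWopen hWcone (hFsmooth.of_le (by norm_cast)) hFhom hz, hF1]
  ring

/-- **Magnetic and vertical derivatives commute up to curvature and the Lorentz
force:** on `{F = 1}`, `u_{:l·k} − u_{·k:l} = (P^i_{lk} + Y^i_l y_k + ∂Y^i_l/∂y^k) u_{·i}`. -/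
theorem stmt_9 (n : ℕ) (hn : 1 ≤ n) (W : Set (Pt n)) (hWopen : IsOpen W)
    (hWy : ∀ z ∈ W, z.2 ≠ 0)
    (hWcone : ∀ z ∈ W, ∀ t : ℝ, 0 < t → (z.1, t • z.2) ∈ W)
    (F : Pt n → ℝ) (hFsmooth : ContDiffOn ℝ (⊤ : ℕ∞) F W)
    (hFpos : ∀ z ∈ W, 0 < F z)
    (hFhom : ∀ z ∈ W, ∀ t : ℝ, 0 < t → F (z.1, t • z.2) = t * F z)
    (ginv : Fin n → Fin n → Pt n → ℝ)
    (hginv : ∀ z ∈ W, ∀ i j, ∑ k, gF F i k z * ginv k j z = if i = j then (1:ℝ) else 0)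
    (hginv' : ∀ z ∈ W, ∀ i j, ∑ k, ginv i k z * gF F k j z = if i = j then (1:ℝ) else 0)
    (Γ : Fin n → Fin n → Fin n → Pt n → ℝ)
    (hΓsmooth : ∀ i j k, ContDiffOn ℝ (⊤ : ℕ∞) (Γ i j k) W)
    (hΓsym : ∀ i j k, ∀ z ∈ W, Γ i j k z = Γ i k j z)
    (Ω : Fin n → Fin n → (Fin n → ℝ) → ℝ)
    (hΩsmooth : ∀ j k, ContDiffOn ℝ (⊤ : ℕ∞) (fun z : Pt n => Ω j k z.1) W)
    (hΩanti : ∀ z ∈ W, ∀ j k, Ω j k z.1 = -Ω k j z.1)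
    (u : Pt n → ℝ) (hu : ContDiffOn ℝ (⊤ : ℕ∞) u W) :
    ∀ z ∈ W, F z = 1 → ∀ l k,
      pdy k (dmS F Γ Ω ginv l u) z
        - ((pdx l (pdy k u) z - (∑ p, Nc Γ p l z * pdy p (pdy k u) z)
              - ∑ p, Γ p l k z * pdy p u z)
            + F z * ∑ j, Yl Ω ginv j l z * pdy j (pdy k u) z)
      = ∑ i, (Pc Γ i l k z + Yl Ω ginv i l z * ylow F k z
          + pdy k (Yl Ω ginv i l) z) * pdy i u z :=
  stmt_9_general n W hWopen hWcone F hFsmooth hFhom ginv hginv' Γ hΓsmooth hΓsym Ω hΩsmooth u hu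

end
end
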